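/- arXiv:2501.01724 — 2 statements merged into one kernel-verified Lean document; each statement's English description precedes it below -/
import Mathlib

section
/- For every real z > 0, the inequalities 1/2 ≤ z(ln z − Φ(z)) ≤ 1 hold. -/
/-!
`log ∘ Γ` is convex on `(0, ∞)` and its slope over `[z, z + 1]` is `log z`, so
`Φ(z) ≤ log z ≤ Φ(z + 1) = Φ(z) + 1/z`; this is the upper bound. For the lower bound, the
estimate `log (1 + 1/x) ≤ (1/x + 1/(x + 1)) / 2` (which is `t ≤ sinh t` at `t = log (1 + 1/x)`)
shows that `f(z) = log z - Φ(z) - 1/(2z)` decreases along `z, z + 1, z + 2, …`, while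
`f(z + n) ≥ -1/(2(z + n)) → 0` by the first inequality; hence `f(z) ≥ 0`.
-/

open Real Filter Topology

/-- The digamma function `Φ(z) = Γ'(z)/Γ(z)`. -/
noncomputable def digamma (z : ℝ) : ℝ := deriv Real.Gamma z / Real.Gamma z

lemma log_le_sub_inv_div_two {y : ℝ} (hy : 1 ≤ y) : log y ≤ (y - y⁻¹) / 2 := by
  rw [← sinh_log (by positivity)]
  exact self_le_sinh_iff.mpr (log_nonneg hy)

lemma log_add_one_sub_log_le {x : ℝ} (hx : 0 < x) :
    log (x + 1) - log x ≤ (x⁻¹ + (x + 1)⁻¹) / 2 := by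
  have key := log_le_sub_inv_div_two (y := (x + 1) / x) ((one_le_div hx).mpr (by linarith))
  rw [log_div (by positivity) hx.ne'] at key
  convert key using 1
  field_simp
  ring

lemma hasDerivAt_log_Gamma {z : ℝ} (hz : 0 < z) :
    HasDerivAt (log ∘ Gamma) (digamma z) z :=
  (differentiableAt_Gamma fun m hm => by linarith [hm ▸ hz, m.cast_nonneg (α := ℝ)]).hasDerivAt.log
    (Gamma_pos_of_pos hz).ne'

lemma log_Gamma_add_one {x : ℝ} (hx : 0 < x) :
    log (Gamma (x + 1)) = log x + log (Gamma x) := by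
  rw [Gamma_add_one hx.ne', log_mul hx.ne' (Gamma_pos_of_pos hx).ne']

lemma digamma_add_one {z : ℝ} (hz : 0 < z) : digamma (z + 1) = digamma z + z⁻¹ := by
  have shifted := (hasDerivAt_log_Gamma (by linarith : 0 < z + 1)).comp_add_const z 1
  have split := (hasDerivAt_log hz.ne').add (hasDerivAt_log_Gamma hz)
  rw [add_comm (digamma z)]
  refine shifted.unique (split.congr_of_eventuallyEq ?_)
  filter_upwards [Ioi_mem_nhds hz] with x hx
  exact log_Gamma_add_one hx

lemma slope_log_Gamma_add_one {z : ℝ} (hz : 0 < z) :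
    slope (log ∘ Gamma) z (z + 1) = log z := by
  simp only [slope_def_field, Function.comp_apply, log_Gamma_add_one hz, add_sub_cancel_left,
    add_sub_cancel_right, div_one]

lemma digamma_le_log {z : ℝ} (hz : 0 < z) : digamma z ≤ log z := by
  rw [← slope_log_Gamma_add_one hz]
  exact convexOn_log_Gamma.le_slope_of_hasDerivAt hz (show 0 < z + 1 by linarith) (lt_add_one z)
    (hasDerivAt_log_Gamma hz)

lemma log_le_digamma_add_inv {z : ℝ} (hz : 0 < z) : log z ≤ digamma z + z⁻¹ := by
  rw [← digamma_add_one hz, ← slope_log_Gamma_add_one hz]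
  exact convexOn_log_Gamma.slope_le_of_hasDerivAt hz (show 0 < z + 1 by linarith) (lt_add_one z)
    (hasDerivAt_log_Gamma (by linarith))

lemma apply_add_nat_le_of_apply_add_one_le {f : ℝ → ℝ} (hf : ∀ x, 0 < x → f (x + 1) ≤ f x)
    {z : ℝ} (hz : 0 < z) (n : ℕ) : f (z + n) ≤ f z := by
  induction n with
  | zero => simp
  | succ n ih =>
    rw [Nat.cast_succ, ← add_assoc]
    exact (hf _ (by positivity)).trans ih

lemma inv_two_mul_le_log_sub_digamma {z : ℝ} (hz : 0 < z) :
    (2 * z)⁻¹ ≤ log z - digamma z := by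
  set f : ℝ → ℝ := fun x => log x - digamma x - (2 * x)⁻¹
  have step (x : ℝ) (hx : 0 < x) : f (x + 1) ≤ f x := by
    have := log_add_one_sub_log_le hx
    simp only [f, digamma_add_one hx, mul_inv] at this ⊢
    linarith
  have tail : Tendsto (fun n : ℕ => -(2 * (z + n))⁻¹) atTop (𝓝 0) := by
    simpa using (tendsto_inv_atTop_zero.comp <| (tendsto_atTop_add_const_left _ z
      tendsto_natCast_atTop_atTop).const_mul_atTop two_pos).neg
  have bound (n : ℕ) : -(2 * (z + n))⁻¹ ≤ f (z + n) := by
    linarith [digamma_le_log (by positivity : 0 < z + n)]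
  have hfz : 0 ≤ f z := le_of_tendsto' tail fun n =>
    (bound n).trans (apply_add_nat_le_of_apply_add_one_le step hz n)
  simp only [f] at hfz
  linarith

theorem z_mul_log_sub_digamma_bounds (z : ℝ) (hz : 0 < z) :
    1 / 2 ≤ z * (Real.log z - digamma z) ∧ z * (Real.log z - digamma z) ≤ 1 := by
  constructor
  · calc 1 / 2 = z * (2 * z)⁻¹ := by field_simp
      _ ≤ z * (log z - digamma z) := by gcongr; exact inv_two_mul_le_log_sub_digamma hz
  · calc z * (log z - digamma z) ≤ z * z⁻¹ := by gcongr; linarith [log_le_digamma_add_inv hz]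
      _ = 1 := mul_inv_cancel₀ hz.ne'
end

section
/- Let ρ ∈ (0,1), let n ≥ 1 be a natural number, and let t ∈ (0, e^{−7/2}]. Then |Φ(ρn+1) − Φ(ρn+ρ+1)| < |ln t − Φ(ρn+1)|. -/
/-!
Since `log ∘ Γ` is convex on `(0, ∞)` (Bohr–Mollerup), its derivative `Φ` is monotone there, and
together with `Φ(x + 1) = Φ(x) + 1/x` this traps `Φ(x + ρ) - Φ(x)` in `[0, 1/x] ⊆ [0, 1]` for
`x = ρn + 1 ≥ 1`. On the other side `Φ(x) ≥ Φ(1) = -γ > -2/3`, so `Φ(x) - log t > 7/2 - 2/3 > 1`.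
-/

open Real Filter Topology

lemma differentiableAt_Gamma_of_pos {x : ℝ} (hx : 0 < x) : DifferentiableAt ℝ Gamma x :=
  differentiableAt_Gamma fun m ↦ ((neg_nonpos.mpr m.cast_nonneg).trans_lt hx).ne'

lemma differentiableAt_log_Gamma_of_pos {x : ℝ} (hx : 0 < x) :
    DifferentiableAt ℝ (log ∘ Gamma) x :=
  (differentiableAt_Gamma_of_pos hx).log (Gamma_pos_of_pos hx).ne'

lemma digamma_eq_deriv_log_Gamma {x : ℝ} (hx : 0 < x) : digamma x = deriv (log ∘ Gamma) x := by
  rw [digamma, Function.comp_def,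
    deriv.log (differentiableAt_Gamma_of_pos hx) (Gamma_pos_of_pos hx).ne']

lemma monotoneOn_digamma : MonotoneOn digamma (Set.Ioi 0) := by
  intro x hx y hy hxy
  rw [digamma_eq_deriv_log_Gamma hx, digamma_eq_deriv_log_Gamma hy]
  exact convexOn_log_Gamma.monotoneOn_deriv (fun _ hz ↦ differentiableAt_log_Gamma_of_pos hz)
    hx hy hxy

lemma digamma_add_one_s9 {x : ℝ} (hx : 0 < x) : digamma (x + 1) = digamma x + 1 / x := by
  rw [digamma_eq_deriv_log_Gamma hx, digamma_eq_deriv_log_Gamma (by positivity),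
    ← deriv_comp_add_const, one_div, ← deriv_log,
    ← deriv_fun_add (differentiableAt_log_Gamma_of_pos hx) (differentiableAt_log hx.ne')]
  apply EventuallyEq.deriv_eq
  filter_upwards [eventually_gt_nhds hx] with y hy
  simp only [Function.comp_apply, Gamma_add_one hy.ne',
    log_mul hy.ne' (Gamma_pos_of_pos hy).ne', add_comm]

lemma digamma_one : digamma 1 = -eulerMascheroniConstant := by
  rw [digamma, hasDerivAt_Gamma_one.deriv, Gamma_one, div_one]

lemma neg_eulerMascheroniConstant_le_digamma {x : ℝ} (hx : 1 ≤ x) :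
    -eulerMascheroniConstant ≤ digamma x :=
  digamma_one ▸ monotoneOn_digamma (Set.mem_Ioi.mpr one_pos) (Set.mem_Ioi.mpr (by linarith)) hx

lemma digamma_add_sub_digamma_mem_Icc {x ρ : ℝ} (hx : 0 < x) (hρ : ρ ∈ Set.Icc (0 : ℝ) 1) :
    digamma (x + ρ) - digamma x ∈ Set.Icc 0 (1 / x) := by
  obtain ⟨hρ0, hρ1⟩ := hρ
  have hlow : digamma x ≤ digamma (x + ρ) :=
    monotoneOn_digamma hx (Set.mem_Ioi.mpr (by linarith)) (by linarith)
  have hup : digamma (x + ρ) ≤ digamma (x + 1) :=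
    monotoneOn_digamma (Set.mem_Ioi.mpr (by linarith)) (Set.mem_Ioi.mpr (by linarith))
      (by linarith)
  rw [digamma_add_one_s9 hx] at hup
  constructor <;> linarith

theorem digamma_diff_lt_general (ρ t : ℝ) (n : ℕ) (hρ : ρ ∈ Set.Ioo (0:ℝ) 1)
    (ht : t ∈ Set.Ioc (0:ℝ) (Real.exp (-(7/2 : ℝ)))) :
    |digamma (ρ * n + 1) - digamma (ρ * n + ρ + 1)| < |Real.log t - digamma (ρ * n + 1)| := by
  set x := ρ * n + 1
  have hx : 1 ≤ x := le_add_of_nonneg_left (mul_nonneg hρ.1.le n.cast_nonneg)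
  obtain ⟨hdiff_nonneg, hdiff_le⟩ :=
    digamma_add_sub_digamma_mem_Icc (x := x) (by linarith) (Set.Ioo_subset_Icc_self hρ)
  have hinv_le : 1 / x ≤ 1 := (div_le_one (by linarith)).mpr hx
  have hlog : log t ≤ -(7 / 2) := (log_le_log ht.1 ht.2).trans_eq (log_exp _)
  have hdigamma := neg_eulerMascheroniConstant_le_digamma hx
  have hγ := eulerMascheroniConstant_lt_two_thirds
  rw [show ρ * n + ρ + 1 = x + ρ by ring, abs_sub_comm, abs_of_nonneg hdiff_nonneg,
    abs_of_neg (by linarith)]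
  linarith

theorem digamma_diff_lt (ρ t : ℝ) (n : ℕ) (hρ : ρ ∈ Set.Ioo (0:ℝ) 1) (hn : 1 ≤ n)
    (ht : t ∈ Set.Ioc (0:ℝ) (Real.exp (-(7/2 : ℝ)))) :
    |digamma (ρ * n + 1) - digamma (ρ * n + ρ + 1)| < |Real.log t - digamma (ρ * n + 1)| :=
  digamma_diff_lt_general ρ t n hρ ht
end
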